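/- Let 0 < α, β ≤ 1 with 1 < α + β ≤ 2, a < b, q : [a,b] → ℝ continuous, and u : [a,b] → ℝ continuous satisfying u(t) = ∫_a^b G(t,r) q(r) u(r) dr with G(t,r) = (1/(Γ(α)Γ(β))) ∫_a^{min(t,r)} (t-s)^{β-1}(r-s)^{α-1} ds. Then, with ‖u‖ = max_{t∈[a,b]} |u(t)|, we have ‖u‖ ≤ ((b-a)^{α+β-1}/((α+β-1)Γ(α)Γ(β))) · ‖u‖ · ∫_a^b |q(r)| dr. -/

import Mathlib

open Real MeasureTheory Set

noncomputable def G (a α β t r : ℝ) : ℝ :=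
  (1 / (Real.Gamma α * Real.Gamma β)) *
    ∫ s in a..(min t r), (t - s) ^ (β - 1) * (r - s) ^ (α - 1)

/-!
Both exponents `β - 1` and `α - 1` are nonpositive, so on `s < m := min t r` the kernel
`(t - s) ^ (β - 1) * (r - s) ^ (α - 1)` is at most `(m - s) ^ (α + β - 2)`, whose integral over
`[a, m]` is `(m - a) ^ (α + β - 1) / (α + β - 1)` since `α + β > 1`. Hence
`0 ≤ G(t, r) ≤ (b - a) ^ (α + β - 1) / ((α + β - 1) Γ(α) Γ(β))` on the square, and bounding the
integral equation at a point where `|u|` attains `M` gives the estimate.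
-/

lemma rpow_mul_rpow_le_rpow_add_of_nonpos {x y z p q : ℝ} (hx : 0 < x) (hxy : x ≤ y) (hxz : x ≤ z)
    (hp : p ≤ 0) (hq : q ≤ 0) : y ^ p * z ^ q ≤ x ^ (p + q) := by
  rw [rpow_add hx]
  exact mul_le_mul (rpow_le_rpow_of_nonpos hx hxy hp) (rpow_le_rpow_of_nonpos hx hxz hq)
    (rpow_nonneg (hx.le.trans hxz) q) (rpow_nonneg hx.le p)

lemma intervalIntegrable_sub_rpow {γ : ℝ} (hγ : 0 < γ) (m a b : ℝ) :
    IntervalIntegrable (fun s => (m - s) ^ (γ - 1)) volume a b := by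
  simpa using (intervalIntegral.intervalIntegrable_rpow' (a := m - a) (b := m - b)
    (by linarith : -1 < γ - 1)).comp_sub_left m

lemma integral_sub_rpow {γ : ℝ} (hγ : 0 < γ) (a m : ℝ) :
    ∫ s in a..m, (m - s) ^ (γ - 1) = (m - a) ^ γ / γ := by
  rw [intervalIntegral.integral_comp_sub_left (fun x => x ^ (γ - 1)) m, sub_self,
    integral_rpow (Or.inl (by linarith)), sub_add_cancel, zero_rpow hγ.ne', sub_zero]

lemma integral_sub_rpow_mul_sub_rpow_le {a m t r α β : ℝ} (ham : a ≤ m) (hmt : m ≤ t) (hmr : m ≤ r)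
    (hα1 : α ≤ 1) (hβ1 : β ≤ 1) (hs1 : 1 < α + β) :
    ∫ s in a..m, (t - s) ^ (β - 1) * (r - s) ^ (α - 1) ≤
      (m - a) ^ (α + β - 1) / (α + β - 1) := by
  have hγ : 0 < α + β - 1 := by linarith
  have hbound : ∀ᵐ s, s ∈ Ioc a m →
      ‖(t - s) ^ (β - 1) * (r - s) ^ (α - 1)‖ ≤ (m - s) ^ (α + β - 1 - 1) := by
    filter_upwards [Measure.ae_ne volume m] with s hsm hs
    have hs : s < m := lt_of_le_of_ne hs.2 hsm
    have hnonneg : 0 ≤ (t - s) ^ (β - 1) * (r - s) ^ (α - 1) :=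
      mul_nonneg (rpow_nonneg (by linarith) _) (rpow_nonneg (by linarith) _)
    rw [Real.norm_of_nonneg hnonneg, show α + β - 1 - 1 = (β - 1) + (α - 1) by ring]
    exact rpow_mul_rpow_le_rpow_add_of_nonpos (by linarith) (by linarith) (by linarith)
      (by linarith) (by linarith)
  calc ∫ s in a..m, (t - s) ^ (β - 1) * (r - s) ^ (α - 1)
      ≤ ‖∫ s in a..m, (t - s) ^ (β - 1) * (r - s) ^ (α - 1)‖ := le_norm_self _
    _ ≤ ∫ s in a..m, (m - s) ^ (α + β - 1 - 1) :=
        intervalIntegral.norm_integral_le_of_norm_le ham hbound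
          (intervalIntegrable_sub_rpow hγ m a m)
    _ = (m - a) ^ (α + β - 1) / (α + β - 1) := integral_sub_rpow hγ a m

lemma abs_G_le {a b α β t r : ℝ} (hα1 : α ≤ 1) (hβ1 : β ≤ 1) (hs1 : 1 < α + β)
    (ht : t ∈ Icc a b) (hr : r ∈ Icc a b) :
    |G a α β t r| ≤ (b - a) ^ (α + β - 1) / ((α + β - 1) * Real.Gamma α * Real.Gamma β) := by
  have hΓ : 0 < Real.Gamma α * Real.Gamma β :=
    mul_pos (Gamma_pos_of_pos (by linarith)) (Gamma_pos_of_pos (by linarith))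
  have ham : a ≤ min t r := le_min ht.1 hr.1
  have hkernel_nonneg : 0 ≤ ∫ s in a..min t r, (t - s) ^ (β - 1) * (r - s) ^ (α - 1) :=
    intervalIntegral.integral_nonneg ham fun s hs =>
      mul_nonneg (rpow_nonneg (by linarith [hs.2, min_le_left t r]) _)
        (rpow_nonneg (by linarith [hs.2, min_le_right t r]) _)
  have hkernel_le := integral_sub_rpow_mul_sub_rpow_le ham (min_le_left t r) (min_le_right t r) hα1 hβ1 hs1
  rw [G, abs_of_nonneg (mul_nonneg (by positivity) hkernel_nonneg)]
  calc 1 / (Real.Gamma α * Real.Gamma β) * ∫ s in a..min t r, (t - s) ^ (β - 1) * (r - s) ^ (α - 1)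
      ≤ 1 / (Real.Gamma α * Real.Gamma β) * ((b - a) ^ (α + β - 1) / (α + β - 1)) := by
        gcongr
        exact hkernel_le.trans (by gcongr; linarith [min_le_left t r, ht.2])
    _ = (b - a) ^ (α + β - 1) / ((α + β - 1) * Real.Gamma α * Real.Gamma β) := by
        field_simp

lemma abs_intervalIntegral_mul_mul_le {f g h : ℝ → ℝ} {a b K M : ℝ} (hab : a ≤ b)
    (hg : IntervalIntegrable g volume a b) (hf : ∀ r ∈ Icc a b, |f r| ≤ K)
    (hh : ∀ r ∈ Icc a b, |h r| ≤ M) :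
    |∫ r in a..b, f r * g r * h r| ≤ K * M * ∫ r in a..b, |g r| := by
  have hK : 0 ≤ K := (abs_nonneg _).trans (hf a ⟨le_rfl, hab⟩)
  rw [← intervalIntegral.integral_const_mul, ← Real.norm_eq_abs]
  refine intervalIntegral.norm_integral_le_of_norm_le hab (ae_of_all volume fun r hr => ?_)
    (hg.abs.const_mul (K * M))
  have hr : r ∈ Icc a b := Ioc_subset_Icc_self hr
  calc ‖f r * g r * h r‖ = |f r| * (|h r| * |g r|) := by
        rw [Real.norm_eq_abs, abs_mul, abs_mul]; ring
    _ ≤ K * (M * |g r|) := by gcongr; exacts [hf r hr, hh r hr]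
    _ = K * M * |g r| := by ring

theorem stmt_11_general (a b α β : ℝ) (hα1 : α ≤ 1) (hβ1 : β ≤ 1)
    (hs1 : 1 < α + β)
    (q u : ℝ → ℝ) (hq : ContinuousOn q (Icc a b))
    (heq : ∀ t ∈ Icc a b, u t = ∫ r in a..b, G a α β t r * q r * u r)
    (M : ℝ) (hM : IsGreatest ((fun t => |u t|) '' Icc a b) M) :
    M ≤ (b - a) ^ (α + β - 1) / ((α + β - 1) * Real.Gamma α * Real.Gamma β) * M *
      ∫ r in a..b, |q r| := by
  obtain ⟨t₀, ht₀, hut₀⟩ := hM.1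
  have hab : a ≤ b := ht₀.1.trans ht₀.2
  calc M = |∫ r in a..b, G a α β t₀ r * q r * u r| := by rw [← hut₀, ← heq t₀ ht₀]
    _ ≤ _ := abs_intervalIntegral_mul_mul_le hab (hq.intervalIntegrable_of_Icc hab)
        (fun r hr => abs_G_le hα1 hβ1 hs1 ht₀ hr) (fun r hr => hM.2 ⟨r, hr, rfl⟩)

theorem stmt_11 (a b α β : ℝ) (hα0 : 0 < α) (hα1 : α ≤ 1) (hβ0 : 0 < β) (hβ1 : β ≤ 1)
    (hs1 : 1 < α + β) (hs2 : α + β ≤ 2) (hab : a < b)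
    (q u : ℝ → ℝ) (hq : ContinuousOn q (Icc a b)) (hu : ContinuousOn u (Icc a b))
    (heq : ∀ t ∈ Icc a b, u t = ∫ r in a..b, G a α β t r * q r * u r)
    (M : ℝ) (hM : IsGreatest ((fun t => |u t|) '' Icc a b) M) :
    M ≤ (b - a) ^ (α + β - 1) / ((α + β - 1) * Real.Gamma α * Real.Gamma β) * M *
      ∫ r in a..b, |q r| :=
  stmt_11_general a b α β hα1 hβ1 hs1 q u hq heq M hM
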